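/- arXiv:2405.01495 — 2 statements merged into one kernel-verified Lean document; each statement's English description precedes it below -/
import Mathlib

section
/- Let 𝒳 and 𝒴 be finite nonempty types, r : 𝒳 × 𝒴 → ℝ a probability mass function with marginals p(x) = Σ_y r (x, y) and q(y) = Σ_x r (x, y), n a positive natural number and ε > 0. Define the jointly typical set T_ε^{(n)} ⊆ (Fin n → 𝒳) × (Fin n → 𝒴) as the set of pairs (x, y) such that x ∈ A_ε^{(n)}(p), y ∈ A_ε^{(n)}(q), and the paired sequence i ↦ (x i, y i) lies in A_ε^{(n)}(r). Then Σ_{(x, y) ∈ T_ε^{(n)}} (∏ i, p (x i)) * (∏ i, q (y i)) ≤ 2^{−n(H(p) + H(q) − H(r) − 3ε)}. -/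
open Finset

/-- Shannon entropy of a pmf `p` on a finite type, `H(p) = -∑ x, p x * log₂ (p x)`
(with the convention `0 * log₂ 0 = 0`). -/
noncomputable def shannonEntropy {𝒳 : Type*} [Fintype 𝒳] (p : 𝒳 → ℝ) : ℝ :=
  -∑ x, p x * Real.logb 2 (p x)

open Classical in
/-- The entropy-typical set `A_ε^{(n)}(p)`: sequences `x ∈ 𝒳^n` with
`2^{-n(H(p)+ε)} ≤ ∏ i, p (x i) ≤ 2^{-n(H(p)-ε)}`. -/
noncomputable def typicalSet {𝒳 : Type*} [Fintype 𝒳] (p : 𝒳 → ℝ) (n : ℕ) (ε : ℝ) :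
    Finset (Fin n → 𝒳) :=
  Finset.univ.filter (fun x =>
    (2 : ℝ) ^ (-(n : ℝ) * (shannonEntropy p + ε)) ≤ ∏ i, p (x i) ∧
    ∏ i, p (x i) ≤ (2 : ℝ) ^ (-(n : ℝ) * (shannonEntropy p - ε)))

open Classical in
/-- The jointly typical set `T_ε^{(n)}` for a joint pmf `r` on `𝒳 × 𝒴` with marginals
`p` and `q`: pairs of sequences each marginally typical and jointly typical, as pairs. -/
noncomputable def jointlyTypicalSet {𝒳 𝒴 : Type*} [Fintype 𝒳] [Fintype 𝒴]
    (r : 𝒳 × 𝒴 → ℝ) (p : 𝒳 → ℝ) (q : 𝒴 → ℝ) (n : ℕ) (ε : ℝ) :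
    Finset ((Fin n → 𝒳) × (Fin n → 𝒴)) :=
  Finset.univ.filter (fun xy =>
    xy.1 ∈ typicalSet p n ε ∧ xy.2 ∈ typicalSet q n ε ∧
    (fun i => (xy.1 i, xy.2 i)) ∈ typicalSet r n ε)

/-!
On the jointly typical set, `p^n(x) ≤ 2^{-n(H(p)-ε)}`, `q^n(y) ≤ 2^{-n(H(q)-ε)}` and
`r^n(x, y) ≥ 2^{-n(H(r)+ε)}`, so `p^n(x) q^n(y) ≤ 2^{-n(H(p)+H(q)-H(r)-3ε)} r^n(x, y)`
pointwise. Summing, and using that `r^n` has total mass `(∑ r)^n = 1`, gives the bound.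
-/

theorem sum_prod_pair_eq_pow {ι α β R : Type*} [Fintype ι] [DecidableEq ι] [Fintype α]
    [Fintype β] [CommSemiring R] (f : α × β → R) :
    ∑ xy : (ι → α) × (ι → β), ∏ i, f (xy.1 i, xy.2 i) = (∑ z, f z) ^ Fintype.card ι := by
  rw [← Fintype.sum_equiv (Equiv.arrowProdEquivProdArrow ι (fun _ => α) (fun _ => β))
    (fun g => ∏ i, f (g i)) _ (fun _ => rfl), ← Fintype.prod_sum (fun _ z => f z),
    prod_const, card_univ]

theorem prod_mul_prod_le_of_mem_jointlyTypicalSet {𝒳 𝒴 : Type*} [Fintype 𝒳] [Fintype 𝒴]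
    {r : 𝒳 × 𝒴 → ℝ} {p : 𝒳 → ℝ} {q : 𝒴 → ℝ} (hq : ∀ y, 0 ≤ q y) {n : ℕ} {ε : ℝ}
    {xy : (Fin n → 𝒳) × (Fin n → 𝒴)} (hxy : xy ∈ jointlyTypicalSet r p q n ε) :
    (∏ i, p (xy.1 i)) * (∏ i, q (xy.2 i)) ≤
      (2 : ℝ) ^ (-(n : ℝ) * (shannonEntropy p + shannonEntropy q - shannonEntropy r - 3 * ε)) *
        ∏ i, r (xy.1 i, xy.2 i) := by
  simp only [jointlyTypicalSet, typicalSet, mem_filter, mem_univ, true_and] at hxy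
  obtain ⟨⟨-, hx⟩, ⟨-, hy⟩, ⟨hr, -⟩⟩ := hxy
  calc (∏ i, p (xy.1 i)) * (∏ i, q (xy.2 i))
      ≤ (2 : ℝ) ^ (-(n : ℝ) * (shannonEntropy p - ε)) *
          (2 : ℝ) ^ (-(n : ℝ) * (shannonEntropy q - ε)) :=
        mul_le_mul hx hy (prod_nonneg fun i _ => hq _) (by positivity)
    _ = (2 : ℝ) ^ (-(n : ℝ) *
          (shannonEntropy p + shannonEntropy q - shannonEntropy r - 3 * ε)) *
          (2 : ℝ) ^ (-(n : ℝ) * (shannonEntropy r + ε)) := by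
        rw [← Real.rpow_add two_pos, ← Real.rpow_add two_pos]
        ring_nf
    _ ≤ _ := mul_le_mul_of_nonneg_left hr (by positivity)

theorem prob_jointlyTypical_of_indep_le_general {𝒳 𝒴 : Type*} [Fintype 𝒳] [Fintype 𝒴]
    (r : 𝒳 × 𝒴 → ℝ) (hr : ∀ xy, 0 ≤ r xy) (hsum : ∑ xy, r xy = 1)
    (p : 𝒳 → ℝ)
    (q : 𝒴 → ℝ) (hq : ∀ y, q y = ∑ x, r (x, y))
    (n : ℕ) (ε : ℝ) :
    ∑ xy ∈ jointlyTypicalSet r p q n ε, (∏ i, p (xy.1 i)) * (∏ i, q (xy.2 i)) ≤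
      (2 : ℝ) ^ (-(n : ℝ) *
        (shannonEntropy p + shannonEntropy q - shannonEntropy r - 3 * ε)) := by
  set C := (2 : ℝ) ^ (-(n : ℝ) *
    (shannonEntropy p + shannonEntropy q - shannonEntropy r - 3 * ε))
  have hq_nonneg : ∀ y, 0 ≤ q y := fun y => hq y ▸ sum_nonneg fun x _ => hr _
  have hmass : ∑ xy ∈ jointlyTypicalSet r p q n ε, ∏ i, r (xy.1 i, xy.2 i) ≤ 1 := by
    classical
    calc _ ≤ ∑ xy : (Fin n → 𝒳) × (Fin n → 𝒴), ∏ i, r (xy.1 i, xy.2 i) :=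
          sum_le_univ_sum_of_nonneg fun _ => prod_nonneg fun _ _ => hr _
      _ = 1 := by rw [sum_prod_pair_eq_pow, hsum, one_pow]
  calc _ ≤ ∑ xy ∈ jointlyTypicalSet r p q n ε, C * ∏ i, r (xy.1 i, xy.2 i) :=
        sum_le_sum fun _ hxy => prod_mul_prod_le_of_mem_jointlyTypicalSet hq_nonneg hxy
    _ = C * ∑ xy ∈ jointlyTypicalSet r p q n ε, ∏ i, r (xy.1 i, xy.2 i) := (mul_sum ..).symm
    _ ≤ C := mul_le_of_le_one_right (by positivity) hmass

/-- If `x` and `y` are drawn independently from the product marginals `p^n` and `q^n`,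
the probability they land in the jointly typical set is at most
`2^{-n(H(p)+H(q)-H(r)-3ε)}`. -/
theorem prob_jointlyTypical_of_indep_le {𝒳 𝒴 : Type*} [Fintype 𝒳] [Fintype 𝒴]
    [Nonempty 𝒳] [Nonempty 𝒴]
    (r : 𝒳 × 𝒴 → ℝ) (hr : ∀ xy, 0 ≤ r xy) (hsum : ∑ xy, r xy = 1)
    (p : 𝒳 → ℝ) (hp : ∀ x, p x = ∑ y, r (x, y))
    (q : 𝒴 → ℝ) (hq : ∀ y, q y = ∑ x, r (x, y))
    (n : ℕ) (hn : 0 < n) (ε : ℝ) (hε : 0 < ε) :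
    ∑ xy ∈ jointlyTypicalSet r p q n ε, (∏ i, p (xy.1 i)) * (∏ i, q (xy.2 i)) ≤
      (2 : ℝ) ^ (-(n : ℝ) *
        (shannonEntropy p + shannonEntropy q - shannonEntropy r - 3 * ε)) :=
  prob_jointlyTypical_of_indep_le_general r hr hsum p q hq n ε
end

section
/- Let 𝒳, 𝒴, 𝒵 be finite nonempty types, r : 𝒳 × 𝒴 × 𝒵 → ℝ a probability mass function with single-coordinate marginals p(x) = Σ_{y,z} r (x, y, z), q(y) = Σ_{x,z} r (x, y, z), s(z) = Σ_{x,y} r (x, y, z), n a positive natural number and ε > 0. Define the jointly typical set T_ε^{(n)} ⊆ (Fin n → 𝒳) × (Fin n → 𝒴) × (Fin n → 𝒵) as the set of triples (x, y, z) such that x ∈ A_ε^{(n)}(p), y ∈ A_ε^{(n)}(q), z ∈ A_ε^{(n)}(s), and the paired sequence i ↦ (x i, y i, z i) lies in A_ε^{(n)}(r). Then Σ_{(x, y, z) ∈ T_ε^{(n)}} (∏ i, p (x i)) * (∏ i, q (y i)) * (∏ i, s (z i)) ≤ 2^{−n(H(p) + H(q) + H(s) − H(r) − 4ε)}. -/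
open Finset

open Classical in
/-- The jointly typical set `T_ε^{(n)}` for a joint pmf `r` on `𝒳 × 𝒴 × 𝒵` with
single-coordinate marginals `p`, `q`, `s`: triples of sequences each marginally
typical and jointly typical as triples. -/
noncomputable def jointlyTypicalSet3 {𝒳 𝒴 𝒵 : Type*} [Fintype 𝒳] [Fintype 𝒴] [Fintype 𝒵]
    (r : 𝒳 × 𝒴 × 𝒵 → ℝ) (p : 𝒳 → ℝ) (q : 𝒴 → ℝ) (s : 𝒵 → ℝ) (n : ℕ) (ε : ℝ) :
    Finset ((Fin n → 𝒳) × (Fin n → 𝒴) × (Fin n → 𝒵)) :=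
  Finset.univ.filter (fun xyz =>
    xyz.1 ∈ typicalSet p n ε ∧ xyz.2.1 ∈ typicalSet q n ε ∧
    xyz.2.2 ∈ typicalSet s n ε ∧
    (fun i => (xyz.1 i, xyz.2.1 i, xyz.2.2 i)) ∈ typicalSet r n ε)

/-- If `x`, `y`, `z` are drawn independently from the product marginals `p^n`, `q^n`,
`s^n`, the probability they land in the jointly typical set is at most
`2^{-n(H(p)+H(q)+H(s)-H(r)-4ε)}`. -/
theorem prob_jointlyTypical3_of_indep_le {𝒳 𝒴 𝒵 : Type*}
    [Fintype 𝒳] [Fintype 𝒴] [Fintype 𝒵] [Nonempty 𝒳] [Nonempty 𝒴] [Nonempty 𝒵]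
    (r : 𝒳 × 𝒴 × 𝒵 → ℝ) (hr : ∀ xyz, 0 ≤ r xyz) (hsum : ∑ xyz, r xyz = 1)
    (p : 𝒳 → ℝ) (hp : ∀ x, p x = ∑ y, ∑ z, r (x, y, z))
    (q : 𝒴 → ℝ) (hq : ∀ y, q y = ∑ x, ∑ z, r (x, y, z))
    (s : 𝒵 → ℝ) (hs : ∀ z, s z = ∑ x, ∑ y, r (x, y, z))
    (n : ℕ) (hn : 0 < n) (ε : ℝ) (hε : 0 < ε) :
    ∑ xyz ∈ jointlyTypicalSet3 r p q s n ε,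
        (∏ i, p (xyz.1 i)) * (∏ i, q (xyz.2.1 i)) * (∏ i, s (xyz.2.2 i)) ≤
      (2 : ℝ) ^ (-(n : ℝ) *
        (shannonEntropy p + shannonEntropy q + shannonEntropy s
          - shannonEntropy r - 4 * ε)) := by
  classical
  set T := jointlyTypicalSet3 r p q s n ε with hT
  set Hp := shannonEntropy p
  set Hq := shannonEntropy q
  set Hs := shannonEntropy s
  set Hr := shannonEntropy r
  -- bound on each term
  have hmem : ∀ xyz ∈ T,
      xyz.1 ∈ typicalSet p n ε ∧ xyz.2.1 ∈ typicalSet q n ε ∧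
      xyz.2.2 ∈ typicalSet s n ε ∧
      (fun i => (xyz.1 i, xyz.2.1 i, xyz.2.2 i)) ∈ typicalSet r n ε := by
    intro xyz hxyz
    simpa [hT, jointlyTypicalSet3] using hxyz
  have hBpos : ∀ a : ℝ, (0:ℝ) < (2:ℝ) ^ a := fun a => Real.rpow_pos_of_pos two_pos a
  -- step 1: each summand bounded
  have hterm : ∀ xyz ∈ T,
      (∏ i, p (xyz.1 i)) * (∏ i, q (xyz.2.1 i)) * (∏ i, s (xyz.2.2 i)) ≤
        (2:ℝ) ^ (-(n:ℝ) * (Hp - ε)) * (2:ℝ) ^ (-(n:ℝ) * (Hq - ε)) *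
          (2:ℝ) ^ (-(n:ℝ) * (Hs - ε)) := by
    intro xyz hxyz
    obtain ⟨h1, h2, h3, _⟩ := hmem xyz hxyz
    simp only [typicalSet, Finset.mem_filter] at h1 h2 h3
    have hp1 := h1.2.1; have hp2 := h1.2.2
    have hq1 := h2.2.1; have hq2 := h2.2.2
    have hs1 := h3.2.1; have hs2 := h3.2.2
    have le1 : (0:ℝ) ≤ ∏ i, p (xyz.1 i) := le_trans (hBpos _).le hp1
    have le2 : (0:ℝ) ≤ ∏ i, q (xyz.2.1 i) := le_trans (hBpos _).le hq1
    have le3 : (0:ℝ) ≤ ∏ i, s (xyz.2.2 i) := le_trans (hBpos _).le hs1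
    exact mul_le_mul (mul_le_mul hp2 hq2 le2 (hBpos _).le) hs2 le3
      (by positivity)
  -- step 2: card bound
  have hcard : (T.card : ℝ) * (2:ℝ) ^ (-(n:ℝ) * (Hr + ε)) ≤ 1 := by
    have h1 : (T.card : ℝ) * (2:ℝ) ^ (-(n:ℝ) * (Hr + ε)) ≤
        ∑ xyz ∈ T, ∏ i, r (xyz.1 i, xyz.2.1 i, xyz.2.2 i) := by
      rw [Finset.card_eq_sum_ones, Nat.cast_sum, Finset.sum_mul]
      apply Finset.sum_le_sum
      intro xyz hxyz
      have := (hmem xyz hxyz).2.2.2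
      simp only [typicalSet, Finset.mem_filter] at this
      simpa using this.2.1
    have h2 : ∑ xyz ∈ T, ∏ i, r (xyz.1 i, xyz.2.1 i, xyz.2.2 i) ≤
        ∑ xyz : (Fin n → 𝒳) × (Fin n → 𝒴) × (Fin n → 𝒵),
          ∏ i, r (xyz.1 i, xyz.2.1 i, xyz.2.2 i) := by
      apply Finset.sum_le_sum_of_subset_of_nonneg (Finset.subset_univ T)
      intro xyz _ _
      exact Finset.prod_nonneg fun i _ => hr _
    have h3 : ∑ xyz : (Fin n → 𝒳) × (Fin n → 𝒴) × (Fin n → 𝒵),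
        ∏ i, r (xyz.1 i, xyz.2.1 i, xyz.2.2 i) = 1 := by
      have heq : ∑ xyz : (Fin n → 𝒳) × (Fin n → 𝒴) × (Fin n → 𝒵),
          ∏ i, r (xyz.1 i, xyz.2.1 i, xyz.2.2 i) = ∑ g : Fin n → 𝒳 × 𝒴 × 𝒵, ∏ i, r (g i) :=
        Fintype.sum_equiv
          ⟨fun xyz i => (xyz.1 i, xyz.2.1 i, xyz.2.2 i),
           fun g => (fun i => (g i).1, fun i => (g i).2.1, fun i => (g i).2.2),
           fun xyz => rfl, fun g => rfl⟩
          (fun xyz => ∏ i, r (xyz.1 i, xyz.2.1 i, xyz.2.2 i))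
          (fun g => ∏ i, r (g i)) (fun xyz => rfl)
      rw [heq, ← Fintype.sum_pow, hsum, one_pow]
    calc (T.card : ℝ) * (2:ℝ) ^ (-(n:ℝ) * (Hr + ε)) ≤ _ := h1
      _ ≤ _ := h2
      _ = 1 := h3
  have hcard' : (T.card : ℝ) ≤ (2:ℝ) ^ ((n:ℝ) * (Hr + ε)) := by
    have h := mul_le_mul_of_nonneg_right hcard (hBpos ((n:ℝ) * (Hr + ε))).le
    rwa [one_mul, mul_assoc, ← Real.rpow_add two_pos, neg_mul, neg_add_cancel,
      Real.rpow_zero, mul_one] at h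
  -- combine
  calc ∑ xyz ∈ T, (∏ i, p (xyz.1 i)) * (∏ i, q (xyz.2.1 i)) * (∏ i, s (xyz.2.2 i))
      ≤ ∑ _xyz ∈ T, (2:ℝ) ^ (-(n:ℝ) * (Hp - ε)) * (2:ℝ) ^ (-(n:ℝ) * (Hq - ε)) *
          (2:ℝ) ^ (-(n:ℝ) * (Hs - ε)) := Finset.sum_le_sum hterm
    _ = (T.card : ℝ) * ((2:ℝ) ^ (-(n:ℝ) * (Hp - ε)) * (2:ℝ) ^ (-(n:ℝ) * (Hq - ε)) *
          (2:ℝ) ^ (-(n:ℝ) * (Hs - ε))) := by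
        rw [Finset.sum_const, nsmul_eq_mul]
    _ ≤ (2:ℝ) ^ ((n:ℝ) * (Hr + ε)) * ((2:ℝ) ^ (-(n:ℝ) * (Hp - ε)) *
          (2:ℝ) ^ (-(n:ℝ) * (Hq - ε)) * (2:ℝ) ^ (-(n:ℝ) * (Hs - ε))) := by
        apply mul_le_mul_of_nonneg_right hcard' (by positivity)
    _ = (2:ℝ) ^ (-(n:ℝ) * (Hp + Hq + Hs - Hr - 4 * ε)) := by
        rw [← Real.rpow_add two_pos, ← Real.rpow_add two_pos, ← Real.rpow_add two_pos]
        ring_nf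
end
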